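/- Let m be a three-dimensional real unit vector and let U(ψ) = R_m(ψ) = cos(ψ/2)·I - i·sin(ψ/2)·(m·σ). For Hermitian 2×2 matrices ρ' and H', tr(ρ' U(ψ)† H' U(ψ)) = cᵀ M c where c = (cos(ψ/2), sin(ψ/2))ᵀ and M is the 2×2 real symmetric matrix with M₁₁ = S₀₀, M₁₂ = M₂₁ = S⃗₀·m, M₂₂ = mᵀ S̃ m, with S the 4×4 FQS matrix of (ρ', H'), S⃗₀ = (S₀₁, S₀₂, S₀₃), and S̃ its lower-right 3×3 block. -/
import Mathlib


open Matrix Complex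

noncomputable section

def PX : Matrix (Fin 2) (Fin 2) ℂ := !![0, 1; 1, 0]
def PY : Matrix (Fin 2) (Fin 2) ℂ := !![0, -Complex.I; Complex.I, 0]
def PZ : Matrix (Fin 2) (Fin 2) ℂ := !![1, 0; 0, -1]

/-- Pauli matrices indexed 0 ↦ X, 1 ↦ Y, 2 ↦ Z. -/
def sig : Fin 3 → Matrix (Fin 2) (Fin 2) ℂ := ![PX, PY, PZ]

/-- ς = (I, -iX, -iY, -iZ). -/
def ς : Fin 4 → Matrix (Fin 2) (Fin 2) ℂ :=
  ![1, -(Complex.I • PX), -(Complex.I • PY), -(Complex.I • PZ)]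

/-- R(q) = q₀ I - i q₁ X - i q₂ Y - i q₃ Z. -/
def Rq (q : Fin 4 → ℝ) : Matrix (Fin 2) (Fin 2) ℂ := ∑ μ, (q μ : ℂ) • ς μ

lemma trace_Rq (A B : Matrix (Fin 2) (Fin 2) ℂ) (q : Fin 4 → ℝ) :
    Matrix.trace (A * (Rq q)ᴴ * B * Rq q)
      = ∑ μ, ∑ ν, ((q μ : ℂ) * (q ν : ℂ)) * Matrix.trace (A * (ς μ)ᴴ * B * ς ν) := by
  have hadj : (Rq q)ᴴ = ∑ μ, (q μ : ℂ) • (ς μ)ᴴ := by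
    simp [Rq, Matrix.conjTranspose_sum, Complex.conj_ofReal]
  rw [hadj, Rq]
  simp only [Matrix.mul_sum, Matrix.sum_mul, Matrix.mul_smul, Matrix.smul_mul,
    Matrix.trace_sum, Matrix.trace_smul, smul_smul, smul_eq_mul]
  rw [Finset.sum_comm]
  refine Finset.sum_congr rfl fun μ _ => ?_
  rw [Finset.mul_sum]
  refine Finset.sum_congr rfl fun ν _ => ?_
  ring

theorem stmt_14 (ρ' H' : Matrix (Fin 2) (Fin 2) ℂ)
    (hρ : ρ'.IsHermitian) (hH : H'.IsHermitian)
    (m : Fin 3 → ℝ) (hm : m 0 ^ 2 + m 1 ^ 2 + m 2 ^ 2 = 1) (ψ : ℝ)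
    (S : Matrix (Fin 4) (Fin 4) ℝ)
    (hS : ∀ μ ν, (S μ ν : ℂ) =
      (1 / 2) * Matrix.trace (ρ' * ((ς μ)ᴴ * H' * ς ν + (ς ν)ᴴ * H' * ς μ))) :
    let U : Matrix (Fin 2) (Fin 2) ℂ :=
      (Real.cos (ψ / 2) : ℂ) • 1 - (Complex.I * (Real.sin (ψ / 2) : ℂ)) • ∑ i, (m i : ℂ) • sig i
    Matrix.trace (ρ' * Uᴴ * H' * U) =
      ((Real.cos (ψ / 2) ^ 2 * S 0 0
        + 2 * Real.cos (ψ / 2) * Real.sin (ψ / 2) * (∑ i : Fin 3, S 0 i.succ * m i)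
        + Real.sin (ψ / 2) ^ 2 * ∑ i : Fin 3, ∑ j : Fin 3, m i * S i.succ j.succ * m j : ℝ) : ℂ) := by
  intro U
  have hU : U = Rq ![Real.cos (ψ/2), Real.sin (ψ/2) * m 0, Real.sin (ψ/2) * m 1,
      Real.sin (ψ/2) * m 2] := by
    show _ = _
    rw [Rq, Fin.sum_univ_four]
    simp only [U, Fin.sum_univ_three, sig, ς]
    simp only [Matrix.cons_val_zero, Matrix.cons_val_one, Matrix.head_cons,
      Matrix.cons_val_two, Matrix.cons_val_three, Matrix.tail_cons, Complex.ofReal_mul]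
    rw [smul_add, smul_add]
    simp only [smul_neg, smul_smul, mul_comm]
    module
  have hS' : ∀ μ ν : Fin 4, (S μ ν : ℂ) =
      (Matrix.trace (ρ' * (ς μ)ᴴ * H' * ς ν) + Matrix.trace (ρ' * (ς ν)ᴴ * H' * ς μ)) / 2 := by
    intro μ ν
    rw [hS]
    simp only [Matrix.mul_add, Matrix.trace_add, Matrix.mul_assoc]
    ring
  rw [hU, trace_Rq]
  simp only [Fin.sum_univ_four, Fin.sum_univ_three, Matrix.cons_val_zero, Matrix.cons_val_one,
    Matrix.head_cons, Matrix.cons_val_two, Matrix.cons_val_three, Matrix.tail_cons,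
    Complex.ofReal_mul, Complex.ofReal_add, Complex.ofReal_pow, Complex.ofReal_ofNat,
    show (Fin.succ 0 : Fin 4) = 1 from rfl, show (Fin.succ 1 : Fin 4) = 2 from rfl,
    show (Fin.succ 2 : Fin 4) = 3 from rfl]
  linear_combination
    -((Real.cos (ψ/2):ℂ)^2) * hS' 0 0
    - 2*(Real.cos (ψ/2):ℂ)*(Real.sin (ψ/2):ℂ)*(m 0:ℂ) * hS' 0 1
    - 2*(Real.cos (ψ/2):ℂ)*(Real.sin (ψ/2):ℂ)*(m 1:ℂ) * hS' 0 2
    - 2*(Real.cos (ψ/2):ℂ)*(Real.sin (ψ/2):ℂ)*(m 2:ℂ) * hS' 0 3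
    - (Real.sin (ψ/2):ℂ)^2 * ((m 0:ℂ)*(m 0:ℂ) * hS' 1 1 + (m 0:ℂ)*(m 1:ℂ) * hS' 1 2
      + (m 0:ℂ)*(m 2:ℂ) * hS' 1 3 + (m 1:ℂ)*(m 0:ℂ) * hS' 2 1 + (m 1:ℂ)*(m 1:ℂ) * hS' 2 2
      + (m 1:ℂ)*(m 2:ℂ) * hS' 2 3 + (m 2:ℂ)*(m 0:ℂ) * hS' 3 1 + (m 2:ℂ)*(m 1:ℂ) * hS' 3 2
      + (m 2:ℂ)*(m 2:ℂ) * hS' 3 3)
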